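/- arXiv:1102.5692 — 2 statements merged into one kernel-verified Lean document; each statement's English description precedes it below -/
import Mathlib

section
/- Let Ω ⊂ ℝ^N be a bounded domain of class C² and let g ∈ 𝒢₂ with h := |g|. If μ ∈ 𝔐_ρ(Ω) is g-good, then μ = f dx + μ₀, where f := g∘u ∈ L¹(Ω, ρdx) (u being the weak solution) and μ₀ := μ − (g∘u)dx is a measure in 𝔐_ρ(Ω) belonging to W^{−2}L^g_loc(Ω), i.e. for every C² subdomain Ω′ compactly contained in Ω there is a constant C(Ω′) with |∫ φ dμ₀| ≤ C(Ω′) ‖φ‖_{W²L^{h*}(Ω′)} for all φ ∈ C_c^∞(Ω′). -/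
open MeasureTheory Metric Set Filter Topology ENNReal

noncomputable section

abbrev Euc (N : ℕ) := EuclideanSpace ℝ (Fin N)

variable {N : ℕ}

/-- Distance to the boundary of `Ω`. -/
def rho (Ω : Set (Euc N)) (x : Euc N) : ℝ := Metric.infDist x (frontier Ω)

/-- A bounded domain of class `C²`: open, connected, bounded, and near every boundary
point `Ω` coincides with the sublevel set of a `C²` function with nonvanishing derivative. -/
def IsBoundedC2Domain (Ω : Set (Euc N)) : Prop :=
  IsOpen Ω ∧ IsConnected Ω ∧ Bornology.IsBounded Ω ∧
  ∀ x ∈ frontier Ω, ∃ f : Euc N → ℝ, ∃ U : Set (Euc N),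
    U ∈ nhds x ∧ ContDiffOn ℝ 2 f U ∧ (∀ y ∈ U, fderiv ℝ f y ≠ 0) ∧
    Ω ∩ U = {y ∈ U | f y < 0}

/-- The Laplacian, as the trace of the second derivative. -/
def lap (φ : Euc N → ℝ) (x : Euc N) : ℝ :=
  ∑ i : Fin N,
    iteratedFDeriv ℝ 2 φ x ![EuclideanSpace.single i 1, EuclideanSpace.single i 1]

/-- Test functions of class `C²(Ω̄)` vanishing on `∂Ω`. -/
def TestFun (Ω : Set (Euc N)) (φ : Euc N → ℝ) : Prop :=
  ContDiff ℝ 2 φ ∧ ∀ x ∈ frontier Ω, φ x = 0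

/-- Smooth functions compactly supported in the open set `Ω`. -/
def CcInf (Ω : Set (Euc N)) (φ : Euc N → ℝ) : Prop :=
  ContDiff ℝ (⊤ : ℕ∞) φ ∧ HasCompactSupport φ ∧ tsupport φ ⊆ Ω

/-- A positive Borel measure on `Ω` with `∫_Ω ρ dμ < ∞`. -/
def MemMrho (Ω : Set (Euc N)) (μ : Measure (Euc N)) : Prop :=
  μ Ωᶜ = 0 ∧ ∫⁻ x, ENNReal.ofReal (rho Ω x) ∂μ < ⊤

/-- A (signed) measure in `𝔐_ρ(Ω)`, given by its Jordan decomposition: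
a mutually singular pair of positive measures, each carried by `Ω` and
with finite `ρ`-integral.  The total variation is `pos + neg`. -/
structure SignedRho (Ω : Set (Euc N)) where
  pos : Measure (Euc N)
  neg : Measure (Euc N)
  singular : MeasureTheory.Measure.MutuallySingular pos neg
  pos_mem : MemMrho Ω pos
  neg_mem : MemMrho Ω neg

/-- `u` is a weak solution of `-Δu + g∘u = μ` in `Ω`, `u = 0` on `∂Ω`,
for the signed measure `μ = μp - μn`. -/
def IsWeakSol (Ω : Set (Euc N)) (g : ℝ → ℝ) (μp μn : Measure (Euc N))
    (u : Euc N → ℝ) : Prop :=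
  IntegrableOn u Ω volume ∧
  IntegrableOn (fun x => g |u x| * rho Ω x) Ω volume ∧
  ∀ φ : Euc N → ℝ, TestFun Ω φ →
    Integrable φ μp ∧ Integrable φ μn ∧
    ∫ x in Ω, (-(u x) * lap φ x + g (u x) * φ x) =
      (∫ x, φ x ∂μp) - ∫ x, φ x ∂μn

/-- `w = 𝔾_μ` is the Green potential of the (signed) measure `μ = μp - μn`. -/
def IsGreenPot (Ω : Set (Euc N)) (μp μn : Measure (Euc N)) (w : Euc N → ℝ) : Prop :=
  IntegrableOn w Ω volume ∧
  ∀ φ : Euc N → ℝ, TestFun Ω φ →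
    Integrable φ μp ∧ Integrable φ μn ∧
    ∫ x in Ω, w x * (-(lap φ x)) = (∫ x, φ x ∂μp) - ∫ x, φ x ∂μn

/-- Membership in the Orlicz space `L^h(S)`. -/
def MemOrlicz (h : ℝ → ℝ) (S : Set (Euc N)) (f : Euc N → ℝ) : Prop :=
  AEStronglyMeasurable f (volume.restrict S) ∧
  ∃ k : ℝ, 0 < k ∧ ∫⁻ x in S, ENNReal.ofReal (h (f x / k)) ∂volume ≤ 1

/-- Membership in `L^h_loc(Ω)`. -/
def MemOrliczLoc (h : ℝ → ℝ) (Ω : Set (Euc N)) (f : Euc N → ℝ) : Prop :=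
  ∀ K : Set (Euc N), IsCompact K → K ⊆ Ω → MemOrlicz h K f

/-- The Luxemburg norm on `L^h(S)`, valued in `ℝ≥0∞` (`∞` if no admissible constant). -/
def orliczNorm (h : ℝ → ℝ) (S : Set (Euc N)) (f : Euc N → ℝ) : ℝ≥0∞ :=
  sInf ((fun r : ℝ => ENNReal.ofReal r) ''
    {r : ℝ | 0 < r ∧ ∫⁻ x in S, ENNReal.ofReal (h (f x / r)) ∂volume ≤ 1})

/-- The norm of `W²L^h(S)`: the sum of the Luxemburg norms of all derivatives
of order at most 2. -/
def sobNorm2 (h : ℝ → ℝ) (S : Set (Euc N)) (φ : Euc N → ℝ) : ℝ≥0∞ :=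
  orliczNorm h S φ
  + ∑ i : Fin N, orliczNorm h S (fun x => fderiv ℝ φ x (EuclideanSpace.single i 1))
  + ∑ i : Fin N, ∑ j : Fin N, orliczNorm h S
      (fun x => iteratedFDeriv ℝ 2 φ x ![EuclideanSpace.single i 1, EuclideanSpace.single j 1])

/-- `h = |g|`. -/
def absFun (g : ℝ → ℝ) : ℝ → ℝ := fun t => |g t|

/-- The class `𝒢`: odd continuous monotone increasing `g` such that `h = |g|` is `C¹`,
strictly convex, `h'(0) = 0`, `h' > 0` on `(0,∞)` and `h'(t) → ∞` as `t → ∞`. -/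
def MemG (g : ℝ → ℝ) : Prop :=
  Continuous g ∧ Monotone g ∧ (∀ t, g (-t) = - g t) ∧
  ContDiff ℝ 1 (absFun g) ∧ StrictConvexOn ℝ Set.univ (absFun g) ∧
  deriv (absFun g) 0 = 0 ∧ (∀ t > 0, 0 < deriv (absFun g) t) ∧
  Tendsto (deriv (absFun g)) atTop atTop

/-- The `Δ₂` condition. -/
def DeltaTwo (h : ℝ → ℝ) : Prop :=
  ∃ C : ℝ, 0 < C ∧ ∀ a > (0:ℝ), ∀ b > (0:ℝ), h (a + b) ≤ C * (h a + h b)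

/-- The conjugate function `h*(t) = ∫_0^t (h')⁻¹(s) ds`. -/
def conjFun (h : ℝ → ℝ) : ℝ → ℝ := fun t => ∫ s in (0:ℝ)..t, Function.invFun (deriv h) s

/-- The class `𝒢₂`: `g ∈ 𝒢` with `h = |g|` and `h*` satisfying the `Δ₂` condition. -/
def MemG2 (g : ℝ → ℝ) : Prop :=
  MemG g ∧ DeltaTwo (absFun g) ∧ DeltaTwo (conjFun (absFun g))

/-- The capacity `C_{2,h*}(E)` (for compact `E ⊆ Ω`): the supremum of `ν(Ω)` over positive
measures `ν` concentrated on `E` whose Green potential exists and has `L^{h*}` norm `≤ 1`. -/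
def capacity (Ω : Set (Euc N)) (hstar : ℝ → ℝ) (E : Set (Euc N)) : ℝ≥0∞ :=
  sSup {m : ℝ≥0∞ | ∃ ν : Measure (Euc N), ν (Ω \ E) = 0 ∧ ν Ωᶜ = 0 ∧
    (∃ w : Euc N → ℝ, IsGreenPot Ω ν 0 w ∧ orliczNorm hstar Ω w ≤ 1) ∧ m = ν Ω}

/-- The signed measure `μ = μp - μn` belongs to `W^{-2}L^g(Ω)` (with `h = h*` as parameter):
`|∫ φ dμ| ≤ C ‖φ‖_{W²L^{h*}(Ω)}` for all test functions `φ ∈ C_c^∞(Ω)`. -/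
def MemWneg2 (Ω : Set (Euc N)) (hstar : ℝ → ℝ) (μp μn : Measure (Euc N)) : Prop :=
  ∃ C : ℝ, 0 < C ∧ ∀ φ : Euc N → ℝ, CcInf Ω φ →
    Integrable φ μp ∧ Integrable φ μn ∧
    ENNReal.ofReal |(∫ x, φ x ∂μp) - ∫ x, φ x ∂μn| ≤
      ENNReal.ofReal C * sobNorm2 hstar Ω φ

/-- Local membership in `W^{-2}L^g`: the bound holds on every `C²` subdomain
compactly contained in `Ω`. -/
def MemWneg2Loc (Ω : Set (Euc N)) (hstar : ℝ → ℝ) (μp μn : Measure (Euc N)) : Prop :=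
  ∀ Ω' : Set (Euc N), IsBoundedC2Domain Ω' → closure Ω' ⊆ Ω → MemWneg2 Ω' hstar μp μn

/-- The Keller–Osserman condition: `∫_1^∞ (∫_0^s g)^{-1/2} ds < ∞`. -/
def KellerOsserman (g : ℝ → ℝ) : Prop :=
  IntegrableOn (fun s : ℝ => (∫ t in (0:ℝ)..s, g t) ^ (-(1:ℝ)/2)) (Set.Ici (1:ℝ)) volume

/-- The subcriticality condition `∫_0^1 g(r^{2-N}) r^{N-1} dr < ∞`. -/
def Subcritical (g : ℝ → ℝ) (N : ℕ) : Prop :=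
  IntegrableOn (fun r : ℝ => g (r ^ ((2:ℝ) - N)) * r ^ ((N:ℝ) - 1))
    (Set.Ioo (0:ℝ) 1) volume

/-- `μ ∈ 𝔅_∞(Ω)` with singular (compact) set `F`. -/
def MemBinfty (Ω : Set (Euc N)) (μ : Measure (Euc N)) (F : Set (Euc N)) : Prop :=
  IsCompact F ∧ F ⊆ Ω ∧ μ Ωᶜ = 0 ∧
  (∀ O : Set (Euc N), IsOpen O → F ⊆ O → μ (Ω \ closure O) < ⊤) ∧
  ∀ A : Set (Euc N), MeasurableSet A → A ⊆ F → A.Nonempty → μ A = ⊤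

/-- A generalized solution of `-Δu + g∘u = μ` in `Ω`, `u = 0` on `∂Ω`,
for `μ ∈ 𝔅_∞(Ω)` with singular set `F`. -/
def IsGenSol (Ω : Set (Euc N)) (g : ℝ → ℝ) (μ : Measure (Euc N)) (F : Set (Euc N))
    (u : Euc N → ℝ) : Prop :=
  (∀ O : Set (Euc N), IsOpen O → F ⊆ O →
    IntegrableOn u (Ω \ closure O) volume ∧
    IntegrableOn (fun x => g (u x)) (Ω \ closure O) volume) ∧
  (∀ φ : Euc N → ℝ, TestFun Ω φ → tsupport φ ⊆ closure Ω \ F →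
    Integrable φ μ ∧
    ∫ x in Ω, (-(u x) * lap φ x + g (u x) * φ x) = ∫ x, φ x ∂μ) ∧
  ∀ ν : Measure (Euc N), MemMrho Ω ν → ν Fᶜ = 0 →
    ∀ v : Euc N → ℝ, IsWeakSol Ω g ν 0 v →
      ∀ᵐ x ∂(volume.restrict (Ω \ F)), v x ≤ u x

/-- A nonnegative solution of the homogeneous equation `-Δu + g∘u = 0` in `Ω ∖ F`
vanishing on `∂Ω`. -/
def IsHomSol (Ω F : Set (Euc N)) (g : ℝ → ℝ) (U : Euc N → ℝ) : Prop :=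
  (∀ O : Set (Euc N), IsOpen O → F ⊆ O →
    IntegrableOn U (Ω \ closure O) volume ∧
    IntegrableOn (fun x => g (U x)) (Ω \ closure O) volume) ∧
  (∀ᵐ x ∂(volume.restrict (Ω \ F)), 0 ≤ U x) ∧
  ∀ φ : Euc N → ℝ, TestFun Ω φ → tsupport φ ⊆ closure Ω \ F →
    ∫ x in Ω, (-(U x) * lap φ x + g (U x) * φ x) = 0



/-! ### Auxiliary lemmas -/

lemma setIntegral_eq_of_zero_off {α : Type*} [MeasurableSpace α] {μ : Measure α}
    {f : α → ℝ} {S K : Set α} (hS : MeasurableSet S) (hK : MeasurableSet K)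
    (hKS : K ⊆ S) (h0 : ∀ x ∉ K, f x = 0) :
    ∫ x in S, f x ∂μ = ∫ x in K, f x ∂μ := by
  have hsupp : Function.support f ⊆ K := fun x hx => by
    by_contra hxK; exact hx (h0 x hxK)
  have e1 : S.indicator f = f := Set.indicator_eq_self.mpr (hsupp.trans hKS)
  have e2 : K.indicator f = f := Set.indicator_eq_self.mpr hsupp
  rw [← integral_indicator hS, e1, ← integral_indicator hK, e2]

lemma integrable_of_zero_off {α : Type*} [MeasurableSpace α] {μ : Measure α}
    {f : α → ℝ} {K : Set α} (hK : MeasurableSet K) (h0 : ∀ x ∉ K, f x = 0)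
    (hi : IntegrableOn f K μ) : Integrable f μ := by
  have hsupp : Function.support f ⊆ K := fun x hx => by
    by_contra hxK; exact hx (h0 x hxK)
  have e2 : K.indicator f = f := Set.indicator_eq_self.mpr hsupp
  rw [← e2]; exact (integrable_indicator_iff hK).mpr hi

/-- Area inequality for a monotone function and its inverse. -/
lemma area_ineq {φ ψ : ℝ → ℝ} (hφc : Continuous φ) (hφm : Monotone φ)
    (hψm : Monotone ψ) (hψφ : ∀ s, ψ (φ s) = s) (hφ0 : φ 0 = 0) {c : ℝ} (hc : 0 ≤ c) :
    c * φ c ≤ (∫ τ in (0:ℝ)..c, φ τ) + ∫ τ in (0:ℝ)..(φ c), ψ τ := by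
  have hψint : ∀ a b : ℝ, IntervalIntegrable ψ volume a b := fun a b =>
    hψm.intervalIntegrable
  have hφint : ∀ a b : ℝ, IntervalIntegrable φ volume a b := fun a b =>
    hφc.intervalIntegrable a b
  have hφc0 : 0 ≤ φ c := by rw [← hφ0]; exact hφm hc
  refine le_of_forall_pos_le_add fun ε hε => ?_
  obtain ⟨n, hn⟩ := exists_nat_gt (c * φ c / ε)
  set m : ℕ := n + 1 with hm
  have hmpos : (0:ℝ) < m := by positivity
  set Δ : ℝ := c / m with hΔ
  have hΔ0 : 0 ≤ Δ := by positivity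
  set x : ℕ → ℝ := fun i => i * Δ with hx
  have hx0 : x 0 = 0 := by simp [hx]
  have hxm : x m = c := by
    simp only [hx, hΔ]; field_simp
  have hxsucc : ∀ i : ℕ, x (i + 1) = x i + Δ := by
    intro i; simp only [hx]; push_cast; ring
  have hxmono : ∀ i : ℕ, x i ≤ x (i + 1) := fun i => by
    rw [hxsucc]; linarith
  have step : ∀ i : ℕ,
      x (i+1) * φ (x (i+1)) - x i * φ (x i) ≤
        (∫ τ in x i..x (i+1), φ τ) + Δ * (φ (x (i+1)) - φ (x i))
          + ∫ τ in φ (x i)..φ (x (i+1)), ψ τ := by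
    intro i
    have hxx := hxmono i
    have hφφ : φ (x i) ≤ φ (x (i+1)) := hφm hxx
    have h1 : Δ * φ (x i) ≤ ∫ τ in x i..x (i+1), φ τ := by
      have : ∫ τ in x i..x (i+1), φ (x i) ≤ ∫ τ in x i..x (i+1), φ τ := by
        apply intervalIntegral.integral_mono_on hxx (intervalIntegrable_const) (hφint _ _)
        intro τ hτ; exact hφm hτ.1
      rw [intervalIntegral.integral_const, smul_eq_mul] at this
      calc Δ * φ (x i) = (x (i+1) - x i) * φ (x i) := by rw [hxsucc]; ring
      _ ≤ _ := this
    have h2 : x i * (φ (x (i+1)) - φ (x i)) ≤ ∫ τ in φ (x i)..φ (x (i+1)), ψ τ := by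
      have : ∫ τ in φ (x i)..φ (x (i+1)), x i ≤ ∫ τ in φ (x i)..φ (x (i+1)), ψ τ := by
        apply intervalIntegral.integral_mono_on hφφ (intervalIntegrable_const) (hψint _ _)
        intro τ hτ
        calc x i = ψ (φ (x i)) := (hψφ _).symm
        _ ≤ ψ τ := hψm hτ.1
      rw [intervalIntegral.integral_const, smul_eq_mul] at this
      calc x i * (φ (x (i+1)) - φ (x i)) = (φ (x (i+1)) - φ (x i)) * x i := by ring
      _ ≤ _ := this
    have hexp : x (i+1) * φ (x (i+1)) - x i * φ (x i)
        = Δ * φ (x i) + Δ * (φ (x (i+1)) - φ (x i)) + x i * (φ (x (i+1)) - φ (x i)) := by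
      rw [hxsucc i]; ring
    linarith
  have htel : ∑ i ∈ Finset.range m, (x (i+1) * φ (x (i+1)) - x i * φ (x i))
      = c * φ c := by
    rw [Finset.sum_range_sub (fun i => x i * φ (x i))]
    rw [hxm, hx0]; ring
  have hsum := Finset.sum_le_sum (fun i (_ : i ∈ Finset.range m) => step i)
  rw [htel] at hsum
  have hs1 : ∑ i ∈ Finset.range m, ∫ τ in x i..x (i+1), φ τ
      = ∫ τ in (0:ℝ)..c, φ τ := by
    rw [intervalIntegral.sum_integral_adjacent_intervals fun i _ => hφint _ _, hx0, hxm]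
  have hs3 : ∑ i ∈ Finset.range m, ∫ τ in φ (x i)..φ (x (i+1)), ψ τ
      = ∫ τ in (0:ℝ)..(φ c), ψ τ := by
    rw [intervalIntegral.sum_integral_adjacent_intervals
      (a := fun i => φ (x i)) (fun i _ => hψint _ _), hx0, hxm, hφ0]
  have hs2 : ∑ i ∈ Finset.range m, Δ * (φ (x (i+1)) - φ (x i)) = Δ * φ c := by
    rw [← Finset.mul_sum, Finset.sum_range_sub (fun i => φ (x i)), hx0, hxm, hφ0]
    ring
  rw [Finset.sum_add_distrib, Finset.sum_add_distrib, hs1, hs2, hs3] at hsum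
  have hΔsmall : Δ * φ c ≤ ε := by
    rw [div_lt_iff₀ hε] at hn
    have hnm : (n:ℝ) ≤ m := by exact_mod_cast Nat.le_succ n
    have : c * φ c ≤ m * ε := by nlinarith
    rw [hΔ, div_mul_eq_mul_div, div_le_iff₀ hmpos, mul_comm ε (m:ℝ)]
    linarith
  linarith

lemma MemG.g_zero {g : ℝ → ℝ} (hg : MemG g) : g 0 = 0 := by
  have h := hg.2.2.1 0
  rw [neg_zero] at h; linarith

lemma MemG.abs_g {g : ℝ → ℝ} (hg : MemG g) (t : ℝ) : |g t| = g |t| := by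
  rcases le_total 0 t with h | h
  · rw [abs_of_nonneg h, abs_of_nonneg]
    rw [← hg.g_zero]; exact hg.2.1 h
  · have hgt : g t ≤ 0 := by rw [← hg.g_zero]; exact hg.2.1 h
    rw [abs_of_nonpos h, abs_of_nonpos hgt, hg.2.2.1]

lemma MemG.h_even {g : ℝ → ℝ} (hg : MemG g) (t : ℝ) : absFun g (-t) = absFun g t := by
  unfold absFun; rw [hg.2.2.1, abs_neg]

lemma MemG.h_zero {g : ℝ → ℝ} (hg : MemG g) : absFun g 0 = 0 := by
  unfold absFun; rw [hg.g_zero, abs_zero]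

lemma MemG.h_abs {g : ℝ → ℝ} (hg : MemG g) (t : ℝ) : absFun g |t| = absFun g t := by
  rcases le_total 0 t with h | h
  · rw [abs_of_nonneg h]
  · rw [abs_of_nonpos h, hg.h_even]

lemma MemG.h_div_le {g : ℝ → ℝ} (hg : MemG g) {A : ℝ} (hA : 1 ≤ A) (s : ℝ) :
    absFun g (s / A) ≤ absFun g s / A := by
  have hA0 : 0 < A := lt_of_lt_of_le one_pos hA
  have := hg.2.2.2.2.1.convexOn.2 (mem_univ s) (mem_univ (0:ℝ))
    (show (0:ℝ) ≤ 1/A by positivity)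
    (show (0:ℝ) ≤ 1 - 1/A by rw [sub_nonneg, div_le_one hA0]; linarith) (by ring)
  simp only [smul_eq_mul, mul_zero, add_zero] at this
  calc absFun g (s / A) = absFun g (1/A * s) := by rw [one_div, inv_mul_eq_div]
  _ ≤ 1/A * absFun g s + (1 - 1/A) * absFun g 0 := this
  _ = absFun g s / A := by rw [hg.h_zero]; ring

/-- The Young inequality package for `g ∈ 𝒢`. -/
lemma MemG.young {g : ℝ → ℝ} (hg : MemG g) :
    (∀ s t : ℝ, 0 ≤ s → 0 ≤ t → s * t ≤ absFun g s + conjFun (absFun g) t) ∧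
    (∀ t, 0 ≤ conjFun (absFun g) t) ∧
    (∀ t, conjFun (absFun g) (-t) = conjFun (absFun g) t) ∧
    Continuous (conjFun (absFun g)) := by
  obtain ⟨gcont, gmono, godd, hc1, hsc, hd0, hdpos, hdtop⟩ := hg
  have hgG : MemG g := ⟨gcont, gmono, godd, hc1, hsc, hd0, hdpos, hdtop⟩
  set h : ℝ → ℝ := absFun g with hh
  set φ : ℝ → ℝ := deriv h with hφdef
  set ψ : ℝ → ℝ := Function.invFun φ with hψdef
  have hdiff : Differentiable ℝ h := hc1.differentiable one_ne_zero
  have φcont : Continuous φ := hc1.continuous_deriv le_rfl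
  have heven : ∀ x, h (-x) = h x := hgG.h_even
  have h0 : h 0 = 0 := hgG.h_zero
  have φmono : StrictMono φ := by
    rw [← strictMonoOn_univ]
    exact hsc.strictMonoOn_deriv (fun x _ => hdiff.differentiableAt)
  have φodd : ∀ x, φ (-x) = -φ x := by
    intro x
    have e : (fun y => h (-y)) = h := funext heven
    have d1 : deriv (fun y => h (-y)) x = -φ (-x) := by
      have := ((hdiff (-x)).hasDerivAt.comp x (hasDerivAt_neg x)).deriv
      simpa [Function.comp_def] using this
    rw [e] at d1
    linarith [d1]
  have φbot : Tendsto φ atBot atBot := by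
    have h1 : Tendsto (fun x => φ (-x)) atBot atTop :=
      hdtop.comp tendsto_neg_atBot_atTop
    have h2 : Tendsto (fun x => -φ (-x)) atBot atBot :=
      tendsto_neg_atTop_atBot.comp h1
    refine h2.congr fun x => ?_
    rw [φodd, neg_neg]
  have φsurj : Function.Surjective φ := φcont.surjective hdtop φbot
  have ψφ : ∀ s, ψ (φ s) = s := fun s => Function.leftInverse_invFun φmono.injective s
  have φψ : ∀ t, φ (ψ t) = t := fun t => Function.invFun_eq (φsurj t)
  have ψmono : Monotone ψ := fun a b hab => by
    rw [← φmono.le_iff_le, φψ, φψ]; exact hab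
  have ψ0 : ψ 0 = 0 := by
    have := ψφ 0; rwa [hd0] at this
  have ψodd : ∀ t, ψ (-t) = -ψ t := by
    intro t
    apply φmono.injective
    rw [φψ, φodd, φψ]
  have hconj : conjFun h = fun t => ∫ s in (0:ℝ)..t, ψ s := rfl
  have ψnonneg : ∀ t, 0 ≤ t → 0 ≤ ψ t := fun t ht => by
    rw [← ψ0]; exact ψmono ht
  have ceven : ∀ t, conjFun h (-t) = conjFun h t := by
    intro t
    rw [hconj]
    simp only
    have e1 : ∫ s in (0:ℝ)..t, ψ (-s) = ∫ s in (-t)..(0:ℝ), ψ s := by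
      simpa using intervalIntegral.integral_comp_neg (a := (0:ℝ)) (b := t) ψ
    have e2 : ∫ s in (0:ℝ)..t, ψ (-s) = -∫ s in (0:ℝ)..t, ψ s := by
      simp only [ψodd]
      rw [intervalIntegral.integral_neg]
    rw [intervalIntegral.integral_symm]
    rw [← e1, e2, neg_neg]
  have cnonneg : ∀ t, 0 ≤ conjFun h t := by
    have key : ∀ t, 0 ≤ t → 0 ≤ conjFun h t := by
      intro t ht
      rw [hconj]
      apply intervalIntegral.integral_nonneg ht
      intro s hs; exact ψnonneg s hs.1
    intro t
    rcases le_total 0 t with ht | ht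
    · exact key t ht
    · rw [← ceven]; exact key (-t) (by linarith)
  have ccont : Continuous (conjFun h) := by
    rw [hconj]
    exact intervalIntegral.continuous_primitive (fun a b => ψmono.intervalIntegrable) 0
  refine ⟨?_, cnonneg, ceven, ccont⟩
  intro s t hs ht
  set c : ℝ := ψ t with hcdef
  have hc : 0 ≤ c := ψnonneg t ht
  have htc : φ c = t := φψ t
  have hFTC : ∀ a b : ℝ, ∫ τ in a..b, φ τ = h b - h a := fun a b =>
    intervalIntegral.integral_deriv_eq_sub (fun x _ => hdiff x) (φcont.intervalIntegrable a b)
  have key1 : h c + t * (s - c) ≤ h s := by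
    rcases le_total c s with hcs | hcs
    · have : ∫ τ in c..s, (t:ℝ) ≤ ∫ τ in c..s, φ τ := by
        apply intervalIntegral.integral_mono_on hcs intervalIntegrable_const
          (φcont.intervalIntegrable c s)
        intro τ hτ
        rw [← htc]; exact φmono.monotone hτ.1
      rw [intervalIntegral.integral_const, smul_eq_mul, hFTC] at this
      nlinarith [this]
    · have : ∫ τ in s..c, φ τ ≤ ∫ τ in s..c, (t:ℝ) := by
        apply intervalIntegral.integral_mono_on hcs (φcont.intervalIntegrable s c)
          intervalIntegrable_const
        intro τ hτ
        rw [← htc]; exact φmono.monotone hτ.2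
      rw [intervalIntegral.integral_const, smul_eq_mul, hFTC] at this
      nlinarith [this]
  have key2 : c * t ≤ h c + conjFun h t := by
    have harea := area_ineq φcont φmono.monotone ψmono ψφ hd0 hc
    rw [hFTC 0 c, h0, sub_zero, htc] at harea
    have e : conjFun h t = ∫ τ in (0:ℝ)..t, ψ τ := by rw [hconj]
    rw [e]; linarith
  nlinarith [key1, key2]

/-- If `μ ∈ 𝔐_ρ(Ω)` is `g`-good with weak solution `u`, then
`μ = (g∘u) dx + μ₀` where `g∘u ∈ L¹(Ω, ρ dx)` and `μ₀ = μ - (g∘u) dx` belongs to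
`W^{-2}L^g_loc(Ω)`. -/
theorem good_measure_decomposition
    {N : ℕ} (Ω : Set (Euc N)) (hΩ : IsBoundedC2Domain Ω)
    (g : ℝ → ℝ) (hg : MemG2 g)
    (μ : SignedRho Ω) (u : Euc N → ℝ) (hu : IsWeakSol Ω g μ.pos μ.neg u) :
    IntegrableOn (fun x => g (u x) * rho Ω x) Ω volume ∧
      ∀ Ω' : Set (Euc N), IsBoundedC2Domain Ω' → closure Ω' ⊆ Ω →
        ∃ C : ℝ, 0 < C ∧ ∀ φ : Euc N → ℝ, CcInf Ω' φ →
          Integrable φ μ.pos ∧ Integrable φ μ.neg ∧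
          ENNReal.ofReal
              |(∫ x, φ x ∂μ.pos) - (∫ x, φ x ∂μ.neg) - ∫ x in Ω, g (u x) * φ x| ≤
            ENNReal.ofReal C * sobNorm2 (conjFun (absFun g)) Ω' φ := by
  obtain ⟨hgG, hΔ2, hΔ2s⟩ := hg
  have habs : ∀ t, |g t| = g |t| := hgG.abs_g
  have gcont : Continuous g := hgG.1
  have uae : AEStronglyMeasurable u (volume.restrict Ω) := hu.1.aestronglyMeasurable
  have rhononneg : ∀ x, 0 ≤ rho Ω x := fun x => Metric.infDist_nonneg
  have rhocont : Continuous (rho Ω) := by unfold rho; exact continuous_infDist_pt _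
  constructor
  · -- Part 1 : `g∘u · ρ ∈ L¹(Ω)`
    apply hu.2.1.mono' ((gcont.comp_aestronglyMeasurable uae).mul
      rhocont.aestronglyMeasurable)
    filter_upwards with x
    simp only [Pi.mul_apply, Real.norm_eq_abs]
    rw [abs_mul, habs (u x), abs_of_nonneg (rhononneg x)]
  · -- Part 2 : local `W^{-2}L^g` bound for `μ₀`
    intro Ω' hΩ' hclos
    by_cases hfr : frontier Ω = ∅
    · -- degenerate case : `Ω` clopen forces the space to be zero-dimensional
      have hcl : IsClopen Ω := isClopen_iff_frontier_eq_empty.mpr hfr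
      have huniv : Ω = univ := hcl.eq_univ hΩ.2.1.nonempty
      have hemp : IsEmpty (Fin N) := by
        by_contra hne
        rw [not_isEmpty_iff] at hne
        obtain ⟨i⟩ := hne
        have hb : Bornology.IsBounded (univ : Set (Euc N)) := huniv ▸ hΩ.2.2.1
        obtain ⟨r, hr⟩ := isBounded_iff_forall_norm_le.mp hb
        have h0 : (0:ℝ) ≤ r := le_trans (norm_nonneg _) (hr 0 (mem_univ _))
        have h1 := hr (EuclideanSpace.single i (r+1)) (mem_univ _)
        rw [EuclideanSpace.norm_single, Real.norm_eq_abs,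
          abs_of_nonneg (by linarith : (0:ℝ) ≤ r + 1)] at h1
        linarith
      refine ⟨1, one_pos, fun φ hφ => ?_⟩
      have hTest : TestFun Ω φ := ⟨hφ.1.of_le (WithTop.coe_le_coe.mpr le_top),
        fun x hx => by rw [hfr] at hx; exact absurd hx (notMem_empty x)⟩
      obtain ⟨hIp, hIn, hid⟩ := hu.2.2 φ hTest
      refine ⟨hIp, hIn, ?_⟩
      have hlap : ∀ x : Euc N, lap φ x = 0 := by
        intro x
        simp [lap, Finset.univ_eq_empty]
      have hid' : ∫ x in Ω, g (u x) * φ x = (∫ x, φ x ∂μ.pos) - ∫ x, φ x ∂μ.neg := by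
        rw [← hid]
        apply integral_congr_ae
        filter_upwards with x
        rw [hlap x]; ring
      rw [hid', sub_self, abs_zero, ENNReal.ofReal_zero]
      exact zero_le
    · -- main case
      have hfrne : (frontier Ω).Nonempty := nonempty_iff_ne_empty.mpr hfr
      have hΩopen : IsOpen Ω := hΩ.1
      have hΩmeas : MeasurableSet Ω := hΩopen.measurableSet
      have hK'c : IsCompact (closure Ω') :=
        Metric.isCompact_of_isClosed_isBounded isClosed_closure hΩ'.2.2.1.closure
      have hK'ne : (closure Ω').Nonempty := hΩ'.2.1.nonempty.closure
      obtain ⟨x₀, hx₀K, hx₀min⟩ := hK'c.exists_isMinOn hK'ne rhocont.continuousOn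
      set δ := rho Ω x₀ with hδdef
      have hδpos : 0 < δ := by
        rw [hδdef]
        unfold rho
        apply (isClosed_frontier.notMem_iff_infDist_pos hfrne).mp
        intro hmem
        have hx₀Ω : x₀ ∈ Ω := hclos hx₀K
        rw [hΩopen.frontier_eq] at hmem
        exact hmem.2 hx₀Ω
      have hδle : ∀ x ∈ closure Ω', δ ≤ rho Ω x := fun x hx => isMinOn_iff.mp hx₀min x hx
      have hKΩ : closure Ω' ⊆ Ω := hclos
      have uaeSub : ∀ {S : Set (Euc N)}, S ⊆ Ω → AEStronglyMeasurable u (volume.restrict S) :=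
        fun hS => uae.mono_measure (Measure.restrict_mono hS le_rfl)
      have hgu_meas : AEStronglyMeasurable (fun x => g (u x)) (volume.restrict (closure Ω')) :=
        gcont.comp_aestronglyMeasurable (uaeSub hKΩ)
      have hgnn : ∀ t : ℝ, 0 ≤ g |t| := fun t => by
        rw [← hgG.g_zero]; exact hgG.2.1 (abs_nonneg _)
      have hgint : IntegrableOn (fun x => g (u x)) (closure Ω') volume := by
        apply Integrable.mono' ((hu.2.1.mono_set hKΩ).const_mul δ⁻¹) hgu_meas
        rw [ae_restrict_iff' measurableSet_closure]
        filter_upwards with x hx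
        have h2 : δ ≤ rho Ω x := hδle x hx
        rw [Real.norm_eq_abs, habs]
        calc g |u x| = δ⁻¹ * (g |u x| * δ) := by field_simp
        _ ≤ δ⁻¹ * (g |u x| * rho Ω x) := by
            apply mul_le_mul_of_nonneg_left _ (by positivity)
            exact mul_le_mul_of_nonneg_left h2 (hgnn _)
      have hgabs_int : IntegrableOn (fun x => |g (u x)|) (closure Ω') volume := hgint.abs
      set A : ℝ := 1 + ∫ x in closure Ω', |g (u x)| with hAdef
      have hA1 : 1 ≤ A := by
        have h0 : 0 ≤ ∫ x in closure Ω', |g (u x)| :=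
          integral_nonneg fun x => abs_nonneg _
        rw [hAdef]; linarith
      have hApos : 0 < A := lt_of_lt_of_le one_pos hA1
      obtain ⟨young, cnonneg, cevenC, ccont⟩ := hgG.young
      refine ⟨2 * A, by linarith, fun φ hφ => ?_⟩
      obtain ⟨hφsm, hφcs, hφsupp⟩ := hφ
      have hTest : TestFun Ω φ := by
        refine ⟨hφsm.of_le (WithTop.coe_le_coe.mpr le_top), fun x hx => ?_⟩
        apply image_eq_zero_of_notMem_tsupport
        intro hmem
        have hxΩ : x ∈ Ω := hKΩ (subset_closure (hφsupp hmem))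
        rw [hΩopen.frontier_eq] at hx; exact hx.2 hxΩ
      obtain ⟨hIp, hIn, hid⟩ := hu.2.2 φ hTest
      refine ⟨hIp, hIn, ?_⟩
      set K := tsupport φ with hKdef
      have hKmeas : MeasurableSet K := (isClosed_tsupport φ).measurableSet
      have hKcomp : IsCompact K := hφcs
      have hKΩ' : K ⊆ Ω' := hφsupp
      have hKK' : K ⊆ closure Ω' := hφsupp.trans subset_closure
      have hKΩfull : K ⊆ Ω := hKK'.trans hKΩ
      set v : Fin N → Euc N → ℝ := fun i x =>
        iteratedFDeriv ℝ 2 φ x ![EuclideanSpace.single i 1, EuclideanSpace.single i 1]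
        with hvdef
      have hvcont : ∀ i, Continuous (v i) := fun i =>
        (hφsm.continuous_iteratedFDeriv (WithTop.coe_le_coe.mpr le_top)).eval_const _
      have hvzero : ∀ i x, x ∉ K → v i x = 0 := by
        intro i x hx
        have hzero : iteratedFDeriv ℝ 2 φ x = 0 := by
          by_contra hne
          exact hx (support_iteratedFDeriv_subset 2 hne)
        simp [hvdef, hzero]
      have huv_int : ∀ i, IntegrableOn (fun x => u x * v i x) K volume := by
        intro i
        obtain ⟨M, hM⟩ := hKcomp.exists_bound_of_continuousOn (hvcont i).continuousOn
        apply Integrable.mono' (((hu.1.mono_set hKΩfull).abs).const_mul M)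
          ((uaeSub hKΩfull).mul (hvcont i).aestronglyMeasurable)
        rw [ae_restrict_iff' hKmeas]
        filter_upwards with x hx
        simp only [Pi.mul_apply, Real.norm_eq_abs]
        rw [abs_mul]
        calc |u x| * |v i x| ≤ |u x| * M :=
          mul_le_mul_of_nonneg_left (by simpa using hM x hx) (abs_nonneg _)
        _ = M * |u x| := mul_comm _ _
      have huv_glob : ∀ i, Integrable (fun x => u x * v i x) volume := fun i =>
        integrable_of_zero_off hKmeas (fun x hx => by rw [hvzero i x hx, mul_zero]) (huv_int i)
      obtain ⟨Mφ, hMφ⟩ := hKcomp.exists_bound_of_continuousOn hφsm.continuous.continuousOn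
      have hgφ_int : IntegrableOn (fun x => g (u x) * φ x) K volume := by
        apply Integrable.mono' (((hgint.mono_set hKK').abs).const_mul Mφ)
          ((gcont.comp_aestronglyMeasurable (uaeSub hKΩfull)).mul
            hφsm.continuous.aestronglyMeasurable)
        rw [ae_restrict_iff' hKmeas]
        filter_upwards with x hx
        simp only [Pi.mul_apply, Real.norm_eq_abs]
        rw [abs_mul]
        calc |g (u x)| * |φ x| ≤ |g (u x)| * Mφ :=
          mul_le_mul_of_nonneg_left (by simpa using hMφ x hx) (abs_nonneg _)
        _ = Mφ * |g (u x)| := mul_comm _ _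
      have hgφ_glob : Integrable (fun x => g (u x) * φ x) volume :=
        integrable_of_zero_off hKmeas
          (fun x hx => by rw [image_eq_zero_of_notMem_tsupport hx, mul_zero]) hgφ_int
      have hsum_int : IntegrableOn (fun x => ∑ i, -(u x * v i x)) Ω volume :=
        integrable_finset_sum _ fun i _ => ((huv_glob i).neg).integrableOn
      have hid2 : (∫ x in Ω, (∑ i, -(u x * v i x))) + ∫ x in Ω, g (u x) * φ x
          = (∫ x, φ x ∂μ.pos) - ∫ x, φ x ∂μ.neg := by
        rw [← integral_add hsum_int hgφ_glob.integrableOn, ← hid]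
        apply integral_congr_ae
        filter_upwards with x
        have hlapeq : -(u x) * lap φ x = ∑ i, -(u x * v i x) := by
          have : lap φ x = ∑ i, v i x := rfl
          rw [this, Finset.mul_sum]
          apply Finset.sum_congr rfl
          intro i _; ring
        rw [hlapeq]
      have esum := integral_finset_sum (μ := volume.restrict Ω) Finset.univ
        (f := fun i x => -(u x * v i x)) (fun i _ => ((huv_glob i).neg).integrableOn)
      have hval : (∫ x, φ x ∂μ.pos) - (∫ x, φ x ∂μ.neg) - ∫ x in Ω, g (u x) * φ x
          = ∑ i, ∫ x in Ω, -(u x * v i x) := by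
        rw [← esum]; linarith [hid2]
      -- the component estimates
      have Ei : ∀ i : Fin N, ENNReal.ofReal |∫ x in Ω, u x * v i x| ≤
          ENNReal.ofReal (2 * A) * orliczNorm (conjFun (absFun g)) Ω' (v i) := by
        intro i
        have hIK : ∫ x in Ω, u x * v i x = ∫ x in K, u x * v i x :=
          setIntegral_eq_of_zero_off hΩmeas hKmeas hKΩfull
            (fun x hx => by rw [hvzero i x hx, mul_zero])
        have main : ∀ r : ℝ, 0 < r →
            (∫⁻ x in Ω', ENNReal.ofReal (conjFun (absFun g) (v i x / r)) ∂volume) ≤ 1 →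
            |∫ x in Ω, u x * v i x| ≤ 2 * A * r := by
          intro r hr hr1
          have hpt : ∀ x ∈ K, |u x * v i x| ≤
              A * r * (absFun g (u x / A) + conjFun (absFun g) (v i x / r)) := by
            intro x hx
            have hy := young (|u x| / A) (|v i x| / r) (by positivity) (by positivity)
            have e1 : absFun g (|u x| / A) = absFun g (u x / A) := by
              rw [show |u x| / A = |u x / A| by rw [abs_div, abs_of_pos hApos], hgG.h_abs]
            have e2 : conjFun (absFun g) (|v i x| / r) = conjFun (absFun g) (v i x / r) := by
              rw [show |v i x| / r = |v i x / r| by rw [abs_div, abs_of_pos hr]]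
              rcases le_total 0 (v i x / r) with hv | hv
              · rw [abs_of_nonneg hv]
              · rw [abs_of_nonpos hv, cevenC]
            rw [e1, e2] at hy
            have e3 : A * r * (|u x| / A * (|v i x| / r)) = |u x| * |v i x| := by
              field_simp
            calc |u x * v i x| = A * r * (|u x| / A * (|v i x| / r)) := by rw [abs_mul, ← e3]
            _ ≤ A * r * (absFun g (u x / A) + conjFun (absFun g) (v i x / r)) :=
              mul_le_mul_of_nonneg_left hy (by positivity)
          have habscont : Continuous (absFun g) := gcont.abs
          have hudivA : AEStronglyMeasurable (fun x => u x / A) (volume.restrict K) := by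
            simpa [div_eq_mul_inv] using (uaeSub hKΩfull).mul_const A⁻¹
          have int1 : IntegrableOn (fun x => absFun g (u x / A)) K volume := by
            apply Integrable.mono' ((hgabs_int.mono_set hKK').mul_const A⁻¹)
              (habscont.comp_aestronglyMeasurable hudivA)
            rw [ae_restrict_iff' hKmeas]
            filter_upwards with x _
            rw [Real.norm_eq_abs]
            have hle := hgG.h_div_le hA1 (u x)
            simp only [absFun] at hle ⊢
            rw [abs_abs, div_eq_mul_inv] at *
            exact hle
          have hint1val : ∫ x in K, absFun g (u x / A) ≤ 1 := by
            have step1 : ∫ x in K, absFun g (u x / A) ≤ ∫ x in K, |g (u x)| * A⁻¹ := by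
              apply integral_mono int1 ((hgabs_int.mono_set hKK').mul_const A⁻¹)
              intro x
              have hle := hgG.h_div_le hA1 (u x)
              simp only [absFun] at hle ⊢
              rw [div_eq_mul_inv] at hle
              exact hle
            have step2 : ∫ x in K, |g (u x)| * A⁻¹ ≤ (A - 1) * A⁻¹ := by
              rw [integral_mul_const]
              apply mul_le_mul_of_nonneg_right _ (by positivity)
              have hmono := setIntegral_mono_set hgabs_int
                (ae_of_all _ fun x => abs_nonneg _) (HasSubset.Subset.eventuallyLE hKK')
              have hval' : ∫ x in closure Ω', |g (u x)| = A - 1 := by rw [hAdef]; ring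
              rw [← hval']; exact hmono
            have step3 : (A - 1) * A⁻¹ ≤ 1 := by
              have h4 : (A - 1) * A⁻¹ ≤ A * A⁻¹ :=
                mul_le_mul_of_nonneg_right (by linarith) (by positivity)
              rwa [mul_inv_cancel₀ (ne_of_gt hApos)] at h4
            linarith
          have int2 : IntegrableOn (fun x => conjFun (absFun g) (v i x / r)) K volume :=
            ((ccont.comp ((hvcont i).div_const r)).continuousOn).integrableOn_compact hKcomp
          have hint2val : ∫ x in K, conjFun (absFun g) (v i x / r) ≤ 1 := by
            have haesm : AEStronglyMeasurable (fun x => conjFun (absFun g) (v i x / r))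
                (volume.restrict K) :=
              (ccont.comp ((hvcont i).div_const r)).aestronglyMeasurable
            rw [integral_eq_lintegral_of_nonneg_ae (ae_of_all _ fun x => cnonneg _) haesm]
            have hle : (∫⁻ x in K, ENNReal.ofReal (conjFun (absFun g) (v i x / r)) ∂volume)
                ≤ 1 :=
              le_trans (lintegral_mono' (Measure.restrict_mono hKΩ' le_rfl) le_rfl) hr1
            calc _ ≤ (1:ℝ≥0∞).toReal := ENNReal.toReal_mono one_ne_top hle
            _ = 1 := ENNReal.toReal_one
          have h1 : |∫ x in K, u x * v i x| ≤ ∫ x in K, |u x * v i x| := by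
            have h1' := norm_integral_le_integral_norm (μ := volume.restrict K)
              fun x => u x * v i x
            simp only [Real.norm_eq_abs] at h1'
            exact h1'
          have h2 : ∫ x in K, |u x * v i x| ≤
              ∫ x in K, A * r * (absFun g (u x / A) + conjFun (absFun g) (v i x / r)) := by
            apply setIntegral_mono_on ((huv_int i).abs) ((int1.add int2).const_mul (A*r)) hKmeas
            intro x hx; exact hpt x hx
          have h3 : ∫ x in K, A * r * (absFun g (u x / A) + conjFun (absFun g) (v i x / r))
              = A * r * ((∫ x in K, absFun g (u x / A))
                + ∫ x in K, conjFun (absFun g) (v i x / r)) := by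
            rw [integral_const_mul, integral_add int1 int2]
          have h4 : A * r * ((∫ x in K, absFun g (u x / A))
                + ∫ x in K, conjFun (absFun g) (v i x / r)) ≤ A * r * 2 := by
            apply mul_le_mul_of_nonneg_left _ (by positivity)
            linarith
          rw [hIK]
          calc |∫ x in K, u x * v i x| ≤ ∫ x in K, |u x * v i x| := h1
          _ ≤ _ := h2
          _ = _ := h3
          _ ≤ A * r * 2 := h4
          _ = 2 * A * r := by ring
        unfold orliczNorm
        rcases Set.eq_empty_or_nonempty {r : ℝ | 0 < r ∧
            ∫⁻ x in Ω', ENNReal.ofReal (conjFun (absFun g) (v i x / r)) ∂volume ≤ 1}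
          with hS | hS
        · rw [hS, image_empty, sInf_empty, ENNReal.mul_top]
          · exact le_top
          · rw [Ne, ENNReal.ofReal_eq_zero]; push_neg; linarith
        · have hc0 : ENNReal.ofReal (2 * A) ≠ 0 := by
            rw [Ne, ENNReal.ofReal_eq_zero]; push_neg; linarith
          have hdiv : ENNReal.ofReal |∫ x in Ω, u x * v i x| / ENNReal.ofReal (2 * A) ≤
              sInf ((fun r : ℝ => ENNReal.ofReal r) '' {r : ℝ | 0 < r ∧
                ∫⁻ x in Ω', ENNReal.ofReal (conjFun (absFun g) (v i x / r)) ∂volume ≤ 1}) := by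
            apply le_sInf
            rintro b ⟨r, hrS, rfl⟩
            apply ENNReal.div_le_of_le_mul'
            calc ENNReal.ofReal |∫ x in Ω, u x * v i x| ≤ ENNReal.ofReal (2*A*r) :=
              ENNReal.ofReal_le_ofReal (main r hrS.1 hrS.2)
            _ = ENNReal.ofReal (2*A) * ENNReal.ofReal r := by
              rw [← ENNReal.ofReal_mul (by positivity)]
          calc ENNReal.ofReal |∫ x in Ω, u x * v i x|
              = ENNReal.ofReal |∫ x in Ω, u x * v i x| / ENNReal.ofReal (2 * A)
                * ENNReal.ofReal (2 * A) :=
            (ENNReal.div_mul_cancel hc0 ENNReal.ofReal_ne_top).symm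
          _ ≤ sInf ((fun r : ℝ => ENNReal.ofReal r) '' {r : ℝ | 0 < r ∧
                ∫⁻ x in Ω', ENNReal.ofReal (conjFun (absFun g) (v i x / r)) ∂volume ≤ 1})
                * ENNReal.ofReal (2 * A) := mul_le_mul_left hdiv _
          _ = _ := mul_comm _ _
      -- final assembly
      have habs_sum : |(∫ x, φ x ∂μ.pos) - (∫ x, φ x ∂μ.neg) - ∫ x in Ω, g (u x) * φ x|
          ≤ ∑ i, |∫ x in Ω, u x * v i x| := by
        rw [hval]
        calc |∑ i, ∫ x in Ω, -(u x * v i x)| ≤ ∑ i, |∫ x in Ω, -(u x * v i x)| :=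
          Finset.abs_sum_le_sum_abs _ _
        _ = ∑ i, |∫ x in Ω, u x * v i x| := by
          apply Finset.sum_congr rfl
          intro i _
          rw [integral_neg, abs_neg]
      calc ENNReal.ofReal
            |(∫ x, φ x ∂μ.pos) - (∫ x, φ x ∂μ.neg) - ∫ x in Ω, g (u x) * φ x|
          ≤ ENNReal.ofReal (∑ i, |∫ x in Ω, u x * v i x|) :=
        ENNReal.ofReal_le_ofReal habs_sum
      _ = ∑ i, ENNReal.ofReal |∫ x in Ω, u x * v i x| :=
        ENNReal.ofReal_sum_of_nonneg fun i _ => abs_nonneg _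
      _ ≤ ∑ i, ENNReal.ofReal (2*A) * orliczNorm (conjFun (absFun g)) Ω' (v i) :=
        Finset.sum_le_sum fun i _ => Ei i
      _ = ENNReal.ofReal (2*A) * ∑ i, orliczNorm (conjFun (absFun g)) Ω' (v i) := by
        rw [Finset.mul_sum]
      _ ≤ ENNReal.ofReal (2*A) * sobNorm2 (conjFun (absFun g)) Ω' φ := by
        apply mul_le_mul_right
        have hstep : ∑ i, orliczNorm (conjFun (absFun g)) Ω' (v i) ≤
            ∑ i : Fin N, ∑ j : Fin N, orliczNorm (conjFun (absFun g)) Ω'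
              (fun x => iteratedFDeriv ℝ 2 φ x
                ![EuclideanSpace.single i 1, EuclideanSpace.single j 1]) := by
          apply Finset.sum_le_sum
          intro i _
          have := Finset.single_le_sum
            (f := fun j => orliczNorm (conjFun (absFun g)) Ω'
              (fun x => iteratedFDeriv ℝ 2 φ x
                ![EuclideanSpace.single i 1, EuclideanSpace.single j 1]))
            (fun j _ => zero_le) (Finset.mem_univ i)
          simpa [hvdef] using this
        calc ∑ i, orliczNorm (conjFun (absFun g)) Ω' (v i) ≤ _ := hstep
        _ ≤ sobNorm2 (conjFun (absFun g)) Ω' φ := le_add_self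


end
end

section
/- Let D ⊆ ℝ^N be an open set and let g ∈ C(ℝ) be odd, monotone increasing, convex on [0,∞), with g(0) = 0. Let μ be a locally finite Borel measure on D and let u, v be functions with 0 ≤ v ≤ u a.e., u, v, g∘u, g∘v ∈ L¹_loc(D), such that −Δu + g∘u = μ and −Δv + g∘v = μ in the sense of distributions in D. Then w := u − v is a subsolution of the homogeneous equation: ∫_D(−w Δφ + g(w)φ)dx ≤ 0 for every nonnegative φ ∈ C_c^∞(D). -/
open MeasureTheory Metric Set Filter Topology ENNReal

noncomputable section

variable {N : ℕ}

/-- Superadditivity of a convex function vanishing at 0. -/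
lemma superadd_of_convex {g : ℝ → ℝ} (hconv : ConvexOn ℝ (Set.Ici (0:ℝ)) g)
    (hg0 : g 0 = 0) {a b : ℝ} (ha : 0 ≤ a) (hb : 0 ≤ b) :
    g a + g b ≤ g (a + b) := by
  rcases eq_or_lt_of_le (add_nonneg ha hb) with h | hs
  · have ha0 : a = 0 := by linarith
    have hb0 : b = 0 := by linarith
    simp [ha0, hb0, hg0]
  · have hsne : a + b ≠ 0 := ne_of_gt hs
    have hx : (a + b) ∈ Set.Ici (0:ℝ) := le_of_lt hs
    have hy : (0:ℝ) ∈ Set.Ici (0:ℝ) := Set.mem_Ici.mpr le_rfl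
    have key : ∀ c : ℝ, 0 ≤ c → c ≤ a + b → g c ≤ (c / (a + b)) * g (a + b) := by
      intro c hc hcs
      have h1 : (0:ℝ) ≤ c / (a + b) := div_nonneg hc (le_of_lt hs)
      have h2 : (0:ℝ) ≤ 1 - c / (a + b) := by
        have : c / (a + b) ≤ 1 := (div_le_one hs).mpr hcs
        linarith
      have h3 : c / (a + b) + (1 - c / (a + b)) = 1 := by ring
      have := hconv.2 hx hy h1 h2 h3
      have hcv : (c / (a + b)) • (a + b) + (1 - c / (a + b)) • (0:ℝ) = c := by
        simp [smul_eq_mul, div_mul_cancel₀ c hsne]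
      rw [hcv] at this
      simpa [smul_eq_mul, hg0] using this
    have hga := key a ha (by linarith)
    have hgb := key b hb (by linarith)
    have : a / (a + b) * g (a + b) + b / (a + b) * g (a + b) = g (a + b) := by
      field_simp
    linarith

/-- A locally-integrable-on-compact function times a continuous function supported in the
compact set is integrable on an ambient set. -/
lemma mul_cutoff_integrable {K D : Set (Euc N)} (hKc : IsCompact K) (hKD : K ⊆ D)
    {f ψ : Euc N → ℝ} (hf : IntegrableOn f K volume) (hψ : Continuous ψ)
    (hψ0 : ∀ x ∉ K, ψ x = 0) :
    Integrable (fun x => f x * ψ x) (volume.restrict D) := by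
  have hKm : MeasurableSet K := hKc.isClosed.measurableSet
  have heq : (fun x => f x * ψ x) = K.indicator (fun x => f x * ψ x) := by
    funext x
    by_cases hx : x ∈ K
    · rw [Set.indicator_of_mem hx]
    · rw [Set.indicator_of_notMem hx, hψ0 x hx, mul_zero]
  rw [heq, integrable_indicator_iff hKm]
  rw [IntegrableOn, Measure.restrict_restrict hKm, Set.inter_eq_self_of_subset_left hKD]
  obtain ⟨C, hC⟩ := hKc.exists_bound_of_continuousOn hψ.continuousOn
  refine Integrable.mono' (hf.norm.mul_const C)
    (hf.aestronglyMeasurable.mul hψ.aestronglyMeasurable) ?_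
  filter_upwards [ae_restrict_mem hKm] with x hx
  calc ‖f x * ψ x‖ = ‖f x‖ * ‖ψ x‖ := norm_mul _ _
    _ ≤ ‖f x‖ * C := by
        exact mul_le_mul_of_nonneg_left (hC x hx) (norm_nonneg _)


/-- If `0 ≤ v ≤ u` both solve `-Δw + g∘w = μ` in the sense of
distributions in an open set `D`, with `g` odd, monotone increasing, convex on `[0,∞)`
and `g(0) = 0`, then `w = u - v` is a subsolution of the homogeneous equation. -/
theorem difference_is_subsolution
    {N : ℕ} (D : Set (Euc N)) (hD : IsOpen D)
    (g : ℝ → ℝ) (hgc : Continuous g) (hodd : ∀ t, g (-t) = - g t)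
    (hmono : Monotone g) (hconv : ConvexOn ℝ (Set.Ici (0:ℝ)) g) (hg0 : g 0 = 0)
    (μ : Measure (Euc N))
    (hμloc : ∀ K : Set (Euc N), IsCompact K → K ⊆ D → μ K < ⊤)
    (u v : Euc N → ℝ)
    (hord : ∀ᵐ x ∂(volume.restrict D), 0 ≤ v x ∧ v x ≤ u x)
    (huL : LocallyIntegrableOn u D volume)
    (hvL : LocallyIntegrableOn v D volume)
    (hguL : LocallyIntegrableOn (fun x => g (u x)) D volume)
    (hgvL : LocallyIntegrableOn (fun x => g (v x)) D volume)
    (hequ : ∀ φ : Euc N → ℝ, CcInf D φ →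
      Integrable φ μ ∧
      ∫ x in D, (-(u x) * lap φ x + g (u x) * φ x) = ∫ x, φ x ∂μ)
    (heqv : ∀ φ : Euc N → ℝ, CcInf D φ →
      Integrable φ μ ∧
      ∫ x in D, (-(v x) * lap φ x + g (v x) * φ x) = ∫ x, φ x ∂μ) :
    ∀ φ : Euc N → ℝ, CcInf D φ → (∀ x, 0 ≤ φ x) →
      ∫ x in D, (-(u x - v x) * lap φ x + g (u x - v x) * φ x) ≤ 0 := by
  intro φ hφ hφpos
  obtain ⟨hφsm, hφcs, hφsupp⟩ := hφ
  set K := tsupport φ with hKdef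
  have hKc : IsCompact K := hφcs
  have hKD : K ⊆ D := hφsupp
  have hKm : MeasurableSet K := hKc.isClosed.measurableSet
  -- the Laplacian of φ is continuous and supported in K
  have h2 : Continuous (iteratedFDeriv ℝ 2 φ) := hφsm.continuous_iteratedFDeriv (WithTop.coe_le_coe.mpr le_top)
  have hlapc : Continuous (lap φ) := by
    unfold lap
    exact continuous_finset_sum _ fun i _ =>
      (ContinuousMultilinearMap.apply ℝ (fun _ : Fin 2 => Euc N) ℝ
        ![EuclideanSpace.single i 1, EuclideanSpace.single i 1]).continuous.comp h2
  have hlap0 : ∀ x ∉ K, lap φ x = 0 := by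
    intro x hx
    have h0 : iteratedFDeriv ℝ 2 φ x = 0 := by
      by_contra h
      exact hx (support_iteratedFDeriv_subset 2 (by simpa [Function.mem_support] using h))
    simp [lap, h0]
  have hφ0 : ∀ x ∉ K, φ x = 0 := fun x hx => image_eq_zero_of_notMem_tsupport hx
  -- integrability on K of the components
  have hu : IntegrableOn u K volume := huL.integrableOn_compact_subset hKD hKc
  have hv : IntegrableOn v K volume := hvL.integrableOn_compact_subset hKD hKc
  have hgu : IntegrableOn (fun x => g (u x)) K volume :=
    hguL.integrableOn_compact_subset hKD hKc
  have hgv : IntegrableOn (fun x => g (v x)) K volume :=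
    hgvL.integrableOn_compact_subset hKD hKc
  have hordK : ∀ᵐ x ∂(volume.restrict K), 0 ≤ v x ∧ v x ≤ u x :=
    ae_mono (Measure.restrict_mono hKD le_rfl) hord
  have hguvm : AEStronglyMeasurable (fun x => g (u x - v x)) (volume.restrict K) :=
    hgc.comp_aestronglyMeasurable (hu.aestronglyMeasurable.sub hv.aestronglyMeasurable)
  have hguv : IntegrableOn (fun x => g (u x - v x)) K volume := by
    refine Integrable.mono' hgu.norm hguvm ?_
    filter_upwards [hordK] with x hx
    have h1 : 0 ≤ u x - v x := by linarith [hx.2]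
    have h2 : g (u x - v x) ≤ g (u x) := hmono (by linarith [hx.1])
    have h3 : 0 ≤ g (u x - v x) := by
      have := hmono h1; rw [hg0] at this; exact this
    rw [Real.norm_eq_abs, Real.norm_eq_abs, abs_of_nonneg h3]
    exact le_trans h2 (le_abs_self _)
  -- integrability of the three integrands over D
  have hmk : ∀ {f : Euc N → ℝ}, IntegrableOn f K volume →
      Integrable (fun x => f x * lap φ x) (volume.restrict D) :=
    fun hf => mul_cutoff_integrable hKc hKD hf hlapc hlap0
  have hmkφ : ∀ {f : Euc N → ℝ}, IntegrableOn f K volume →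
      Integrable (fun x => f x * φ x) (volume.restrict D) :=
    fun hf => mul_cutoff_integrable hKc hKD hf hφsm.continuous hφ0
  have hA : Integrable (fun x => -(u x) * lap φ x + g (u x) * φ x) (volume.restrict D) := by
    have := (hmk hu.neg).add (hmkφ hgu)
    simpa [neg_mul, Pi.add_def] using this
  have hB : Integrable (fun x => -(v x) * lap φ x + g (v x) * φ x) (volume.restrict D) := by
    have := (hmk hv.neg).add (hmkφ hgv)
    simpa [neg_mul, Pi.add_def] using this
  have hR : Integrable (fun x => (g (u x - v x) - g (u x) + g (v x)) * φ x)
      (volume.restrict D) := hmkφ ((hguv.sub hgu).add hgv)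
  -- split the target integral
  have hsplit : ∫ x in D, (-(u x - v x) * lap φ x + g (u x - v x) * φ x) =
      ((∫ x in D, (-(u x) * lap φ x + g (u x) * φ x))
        - ∫ x in D, (-(v x) * lap φ x + g (v x) * φ x))
      + ∫ x in D, (g (u x - v x) - g (u x) + g (v x)) * φ x := by
    have hAB : Integrable (fun x => (-(u x) * lap φ x + g (u x) * φ x)
        - (-(v x) * lap φ x + g (v x) * φ x)) (volume.restrict D) := hA.sub hB
    rw [← integral_sub hA hB, ← integral_add hAB hR]
    exact integral_congr_ae (ae_of_all _ fun x => by ring)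
  rw [hsplit, (hequ φ ⟨hφsm, hφcs, hφsupp⟩).2, (heqv φ ⟨hφsm, hφcs, hφsupp⟩).2,
    sub_self, zero_add]
  refine integral_nonpos_of_ae ?_
  filter_upwards [hord] with x hx
  have h1 : 0 ≤ u x - v x := by linarith [hx.2]
  have h2 : g (u x - v x) + g (v x) ≤ g (u x) := by
    have := superadd_of_convex hconv hg0 h1 hx.1
    rwa [sub_add_cancel] at this
  exact mul_nonpos_iff.mpr (Or.inr ⟨by linarith, hφpos x⟩)



end
end
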